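/- Let ζ_1, ..., ζ_N be a basis of a subspace of functions on Ω with empirical interpolation points x_1, ..., x_N chosen greedily (x_1 = argmax|ζ_1|, and x_I = argmax of the residual of interpolating ζ_I by ζ_1,...,ζ_{I−1} at x_1,...,x_{I−1}). Let T̂ ∈ 𝕋 be a strictly increasing homeomorphism of ℝ with T̂(x_i) ∈ Ω for all i, where the argmax is taken over T̂(Ω) ∩ Ω for the transported problem. Then the greedy empirical interpolation points of the transported basis T̂^♭ζ_1, ..., T̂^♭ζ_N are exactly T̂(x_1), ..., T̂(x_N). -/
import Mathlib


/-- The pullback `T^♭ ξ := ξ ∘ T⁻¹`. -/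
noncomputable def pullback (T ξ : ℝ → ℝ) : ℝ → ℝ := ξ ∘ Function.invFun T

/-- `IsEIM D ζ x`: the points `x` are the greedy empirical interpolation points of
the basis `ζ` over the domain `D`: for each `I` there are interpolation
coefficients `ϑ` matching `ζ I` at the earlier points, and `x I` is the (unique,
strict) maximizer of the interpolation residual over `D`. -/
def IsEIM {N : ℕ} (D : Set ℝ) (ζ : Fin N → ℝ → ℝ) (x : Fin N → ℝ) : Prop :=
  ∀ I : Fin N, ∃ ϑ : Fin N → ℝ,
    (∀ i : Fin N, i < I → ∑ n ∈ Finset.Iio I, ϑ n * ζ n (x i) = ζ I (x i)) ∧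
    x I ∈ D ∧
    (∀ y ∈ D, y ≠ x I →
      |ζ I y - ∑ n ∈ Finset.Iio I, ϑ n * ζ n y| <
      |ζ I (x I) - ∑ n ∈ Finset.Iio I, ϑ n * ζ n (x I)|)

/-- Greedy empirical interpolation commutes with transport: the greedy EIM points of
the transported basis T̂^♭ζ over T̂(Ω) ∩ Ω are exactly the transported particles
T̂(x_i). -/
theorem eim_commutes_with_transport {N : ℕ} (Ω : Set ℝ)
    (ζ : Fin N → ℝ → ℝ) (x : Fin N → ℝ)
    (T : ℝ → ℝ) (hmono : StrictMono T) (hbij : Function.Bijective T)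
    (hmem : ∀ i, T (x i) ∈ Ω)
    (heim : IsEIM Ω ζ x) :
    IsEIM (T '' Ω ∩ Ω) (fun n => pullback T (ζ n)) (fun i => T (x i)) := by
  have hinv : ∀ z : ℝ, Function.invFun T (T z) = z :=
    fun z => Function.leftInverse_invFun hbij.injective z
  have hpb : ∀ ξ : ℝ → ℝ, ∀ z : ℝ, pullback T ξ (T z) = ξ z := by
    intro ξ z; simp [pullback, hinv]
  intro I
  obtain ⟨ϑ, h1, h2, h3⟩ := heim I
  refine ⟨ϑ, ?_, ?_, ?_⟩
  · intro i hi
    simpa [hpb] using h1 i hi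
  · exact ⟨⟨x I, h2, rfl⟩, hmem I⟩
  · rintro y ⟨⟨z, hz, rfl⟩, -⟩ hne
    have hzne : z ≠ x I := fun h => hne (by rw [h])
    simpa [hpb] using h3 z hz hzne
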